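/- For every inductive game tree T, every internal node h of T, every action a ∈ A(h), and every real weight c, the baseline-corrected regret estimate is unbiased: E_z[ 𝟙(z passes through h)·(c/π^q(h))·( v̂(S_h, a; z_h) − v̂(S_h; z_h) ) ] = c·( û((S_h)_a) − û(S_h) ), where S_h is the subtree of T rooted at h, z_h is the continuation of the trajectory z from h, and the estimate is defined to be 0 on trajectories not passing through h. -/

import Mathlib

/-- An inductive game tree: either a leaf carrying a utility `u`, or an internal node
carrying a nonempty finite action set `Fin (n+1)`, a subtree `child a` for each action,
a strategy distribution `σ`, a sampling distribution `q`, and baseline values `b`. -/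
inductive GameTree : Type
  | leaf (u : ℝ) : GameTree
  | node (n : ℕ) (child : Fin (n + 1) → GameTree)
      (σ : Fin (n + 1) → ℝ) (q : Fin (n + 1) → ℝ) (b : Fin (n + 1) → ℝ) : GameTree

namespace GameTree

/-- Expected utility `û`: `û(leaf u) = u` and `û(T) = Σ_a σ_T(a)·û(T_a)` at internal nodes. -/
noncomputable def eu : GameTree → ℝ
  | leaf u => u
  | node n child σ _ _ => ∑ a : Fin (n + 1), σ a * eu (child a)

/-- Validity: at every internal node, `σ` is a probability distribution and `q` is a
probability distribution with `q a > 0` for every action `a`. -/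
def Valid : GameTree → Prop
  | leaf _ => True
  | node n child σ q _ =>
      (∀ a, 0 ≤ σ a) ∧ (∑ a : Fin (n + 1), σ a = 1) ∧
      (∀ a, 0 < q a) ∧ (∑ a : Fin (n + 1), q a = 1) ∧
      (∀ a, Valid (child a))

/-- A sampled trajectory of `T`: a root-to-leaf path in the tree. -/
inductive Traj : GameTree → Type
  | leaf (u : ℝ) : Traj (.leaf u)
  | step {n : ℕ} {child : Fin (n + 1) → GameTree} {σ q b : Fin (n + 1) → ℝ}
      (astar : Fin (n + 1)) (t : Traj (child astar)) : Traj (.node n child σ q b)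

/-- Expectation `E_z[f(z)]` over the trajectory distribution (each trajectory has the
product of the `q`-probabilities of its edges as probability). -/
noncomputable def expT : (T : GameTree) → (Traj T → ℝ) → ℝ
  | leaf u, f => f (.leaf u)
  | node n child _ q _, f =>
      ∑ a : Fin (n + 1), q a * expT (child a) (fun t => f (.step a t))

/-- Variance `Var_z[f(z)]` over the trajectory distribution. -/
noncomputable def varT (T : GameTree) (f : Traj T → ℝ) : ℝ :=
  expT T (fun z => (f z - expT T f) ^ 2)

/-- Baseline-corrected sampled value `v̂(T; z) = Σ_a σ_T(a)·v̂(T, a; z)`, with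
`v̂(T, a; z) = (𝟙[a = a*]/q_T(a))·(v̂(T_a; z') − b_T(a)) + b_T(a)`. -/
noncomputable def bval : {T : GameTree} → Traj T → ℝ
  | _, .leaf u => u
  | _, @Traj.step n child σ q b astar t =>
      ∑ a : Fin (n + 1), σ a *
        ((if a = astar then (1 : ℝ) else 0) / q a * (bval t - b a) + b a)

/-- Baseline-corrected sampled action value `v̂(T, a; z)` at an internal root:
`(𝟙[a = a*]/q_T(a))·(v̂(T_a; z') − b_T(a)) + b_T(a)` where `z = a*·z'`. -/
noncomputable def bvalAct {n : ℕ} {child : Fin (n + 1) → GameTree}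
    {σ q b : Fin (n + 1) → ℝ}
    (a : Fin (n + 1)) : Traj (.node n child σ q b) → ℝ
  | .step astar t => (if a = astar then (1 : ℝ) else 0) / q a * (bval t - b a) + b a

/-- A pointer to an internal node `h` of the tree, identified with its action path
from the root. -/
inductive INode : GameTree → Type
  | here {n : ℕ} {child : Fin (n + 1) → GameTree} {σ q b : Fin (n + 1) → ℝ} :
      INode (.node n child σ q b)
  | step {n : ℕ} {child : Fin (n + 1) → GameTree} {σ q b : Fin (n + 1) → ℝ}
      (a : Fin (n + 1)) (p : INode (child a)) : INode (.node n child σ q b)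

/-- The size parameter of the action set of the internal node pointed to by `p`,
so that this action set is `Fin (numActs p + 1)`. -/
def numActs : {T : GameTree} → INode T → ℕ
  | _, @INode.here n _ _ _ _ => n
  | _, .step _ p => numActs p

/-- `û((S_h)_a)`: the expected utility of the subtree reached from the node `h = p`
by the action `a`. -/
noncomputable def euActAt : {T : GameTree} → (p : INode T) → Fin (numActs p + 1) → ℝ
  | _, @INode.here _ child _ _ _, a => eu (child a)
  | _, .step _ p, a => euActAt p a

/-- `û(S_h)`: the expected utility of the subtree rooted at the node `h = p`. -/
noncomputable def euAt : {T : GameTree} → INode T → ℝ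
  | _, @INode.here n child σ q b => eu (.node n child σ q b)
  | _, .step _ p => euAt p

/-- The baseline-corrected sampled regret estimate
`𝟙(z passes through h) · (c/πq(h)) · (v̂(S_h, a; z_h) − v̂(S_h; z_h))` for the internal node
`h = p` and action `a`, where `z_h` is the continuation of the trajectory `z` from `h`;
it is defined to be `0` on trajectories not passing through `h`.  (The division by
`πq(h)`, the product of the `q`-probabilities of the edges on the path to `h`, is
performed one edge at a time while descending along the path.) -/
noncomputable def regretEst (c : ℝ) :
    {T : GameTree} → (p : INode T) → Fin (numActs p + 1) → Traj T → ℝ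
  | _, .here, a, z => c * (bvalAct a z - bval z)
  | _, @INode.step n child σ q b a0 p, a, .step astar t =>
      if h : astar = a0 then regretEst c p a (h ▸ t) / q a0 else 0

end GameTree

namespace GameTree

lemma expT_add (T : GameTree) (f g : Traj T → ℝ) :
    expT T (fun z => f z + g z) = expT T f + expT T g := by
  induction T with
  | leaf u => simp [expT]
  | node n child σ q b ih =>
    simp only [expT, ih, mul_add, Finset.sum_add_distrib]

lemma expT_smul (T : GameTree) (r : ℝ) (f : Traj T → ℝ) :
    expT T (fun z => r * f z) = r * expT T f := by
  induction T with
  | leaf u => simp [expT]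
  | node n child σ q b ih =>
    simp only [expT, ih, Finset.mul_sum]
    congr 1; funext a; ring

lemma expT_zero (T : GameTree) : expT T (fun _ => 0) = 0 := by
  simpa using expT_smul T 0 (fun _ => 0)

lemma expT_const (T : GameTree) (hV : T.Valid) (r : ℝ) :
    expT T (fun _ => r) = r := by
  induction T with
  | leaf u => simp [expT]
  | node n child σ q b ih =>
    obtain ⟨_, _, _, hq1, hc⟩ := hV
    simp only [expT, ih _ (hc _)]
    rw [← Finset.sum_mul, hq1, one_mul]

lemma expT_sum (T : GameTree) {ι : Type*} (s : Finset ι) (f : ι → Traj T → ℝ) :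
    expT T (fun z => ∑ i ∈ s, f i z) = ∑ i ∈ s, expT T (f i) := by
  classical
  induction s using Finset.induction_on with
  | empty => simpa using expT_zero T
  | @insert _ _ hni ih =>
    simp only [Finset.sum_insert hni]
    rw [expT_add, ih]

lemma expT_affine (T : GameTree) (hV : T.Valid) (r s : ℝ) (f : Traj T → ℝ) :
    expT T (fun z => r * f z + s) = r * expT T f + s := by
  rw [expT_add, expT_smul, expT_const T hV]

lemma bval_exp (T : GameTree) (hV : T.Valid) : expT T bval = eu T := by
  induction T with
  | leaf u => simp [expT, bval, eu]
  | node n child σ q b ih =>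
    obtain ⟨_, _, hq0, hq1, hc⟩ := hV
    have key : expT (node n child σ q b) bval
        = ∑ astar : Fin (n+1), q astar * ∑ a : Fin (n+1), σ a *
            ((if a = astar then (1:ℝ) else 0) / q a * (eu (child astar) - b a) + b a) := by
      simp only [expT]
      refine Finset.sum_congr rfl fun astar _ => ?_
      congr 1
      show expT (child astar) (fun t => ∑ a : Fin (n+1), σ a *
            ((if a = astar then (1:ℝ) else 0) / q a * (bval t - b a) + b a)) = _
      rw [expT_sum]
      refine Finset.sum_congr rfl fun a _ => ?_
      have h2 : (fun t : Traj (child astar) => σ a *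
            ((if a = astar then (1:ℝ) else 0) / q a * (bval t - b a) + b a))
          = fun t => (σ a * ((if a = astar then (1:ℝ) else 0) / q a)) * bval t
              + σ a * (b a - (if a = astar then (1:ℝ) else 0) / q a * b a) := by
        funext t; ring
      rw [h2, expT_affine _ (hc astar), ih astar (hc astar)]
      ring
    rw [key]
    simp only [Finset.mul_sum]
    rw [Finset.sum_comm]
    show (∑ a : Fin (n+1), ∑ astar : Fin (n+1), q astar * (σ a *
        ((if a = astar then (1:ℝ) else 0) / q a * (eu (child astar) - b a) + b a))) = _
    have inner : ∀ a : Fin (n+1), (∑ astar : Fin (n+1), q astar * (σ a *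
        ((if a = astar then (1:ℝ) else 0) / q a * (eu (child astar) - b a) + b a)))
        = σ a * eu (child a) := by
      intro a
      have hterm : ∀ astar : Fin (n+1), q astar * (σ a *
          ((if a = astar then (1:ℝ) else 0) / q a * (eu (child astar) - b a) + b a))
          = (if astar = a then σ a * (eu (child a) - b a) else 0)
            + q astar * (σ a * b a) := by
        intro astar
        by_cases h : astar = a
        · subst h
          simp only [if_pos rfl, ↓reduceIte]
          have hqa := (hq0 astar).ne'
          field_simp
        · simp [h, Ne.symm h]
      simp only [hterm]
      rw [Finset.sum_add_distrib, Finset.sum_ite_eq' Finset.univ a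
        (fun _ => σ a * (eu (child a) - b a)), ← Finset.sum_mul, hq1]
      simp only [Finset.mem_univ, if_pos]
      ring
    simp only [inner, eu]

end GameTree

namespace GameTree

lemma bvalAct_exp {n : ℕ} {child : Fin (n+1) → GameTree} {σ q b : Fin (n+1) → ℝ}
    (hV : (GameTree.node n child σ q b).Valid) (a : Fin (n+1)) :
    expT (.node n child σ q b) (bvalAct a) = eu (child a) := by
  obtain ⟨_, _, hq0, hq1, hc⟩ := hV
  show (∑ astar : Fin (n+1), q astar * expT (child astar)
      (fun t => bvalAct a (Traj.step (σ := σ) (q := q) (b := b) astar t))) = _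
  have hin : ∀ astar : Fin (n+1), expT (child astar)
      (fun t => bvalAct a (Traj.step (σ := σ) (q := q) (b := b) astar t))
      = (if a = astar then (1:ℝ) else 0) / q a * (eu (child astar) - b a) + b a := by
    intro astar
    have h2 : (fun t : Traj (child astar) => bvalAct a (Traj.step (σ := σ) (q := q) (b := b) astar t))
        = fun t => ((if a = astar then (1:ℝ) else 0) / q a) * bval t
            + (b a - (if a = astar then (1:ℝ) else 0) / q a * b a) := by
      funext t
      show (if a = astar then (1:ℝ) else 0) / q a * (bval t - b a) + b a = _
      ring
    rw [h2, expT_affine _ (hc astar), bval_exp _ (hc astar)]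
    ring
  simp only [hin]
  have hterm : ∀ astar : Fin (n+1), q astar *
      ((if a = astar then (1:ℝ) else 0) / q a * (eu (child astar) - b a) + b a)
      = (if astar = a then eu (child a) - b a else 0) + q astar * b a := by
    intro astar
    by_cases h : astar = a
    · subst h
      simp only [if_pos rfl, ↓reduceIte]
      have hqa := (hq0 astar).ne'
      field_simp
    · simp [h, Ne.symm h]
  simp only [hterm]
  rw [Finset.sum_add_distrib, Finset.sum_ite_eq' Finset.univ a
    (fun _ => eu (child a) - b a), ← Finset.sum_mul, hq1]
  simp only [Finset.mem_univ, if_pos]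
  ring

end GameTree

theorem regretEst_unbiased' (T : GameTree) (hV : T.Valid)
    (p : GameTree.INode T) (a : Fin (GameTree.numActs p + 1)) (c : ℝ) :
    GameTree.expT T (GameTree.regretEst c p a)
      = c * (GameTree.euActAt p a - GameTree.euAt p) := by
  induction p with
  | @here n child σ q b =>
    have h1 : GameTree.regretEst c GameTree.INode.here a
        = fun z => c * GameTree.bvalAct (n := n) a z + (-c) * GameTree.bval z := by
      funext z
      show c * (GameTree.bvalAct (n := n) a z - GameTree.bval z) = _
      ring
    have h2 := GameTree.expT_add (GameTree.node n child σ q b)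
        (fun z => c * GameTree.bvalAct (n := n) a z) (fun z => (-c) * GameTree.bval z)
    have h3 := GameTree.expT_smul (GameTree.node n child σ q b) c (GameTree.bvalAct (n := n) a)
    have h4 := GameTree.expT_smul (GameTree.node n child σ q b) (-c) GameTree.bval
    rw [h1, h2, h3, h4, GameTree.bvalAct_exp hV a, GameTree.bval_exp _ hV]
    show c * GameTree.eu (child a) + -c * GameTree.eu (.node n child σ q b)
      = c * (GameTree.eu (child a) - GameTree.eu (.node n child σ q b))
    ring
  | @step n child σ q b a0 p ih =>
    obtain ⟨_, _, hq0, hq1, hc⟩ := hV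
    show (∑ astar : Fin (n+1), q astar * GameTree.expT (child astar)
        (fun t => GameTree.regretEst c (.step a0 p) a (.step astar t))) = _
    rw [Finset.sum_eq_single a0]
    · have h1 : (fun t : GameTree.Traj (child a0) =>
          GameTree.regretEst c (.step a0 p) a (.step a0 t))
          = fun t => (q a0)⁻¹ * GameTree.regretEst c p a t := by
        funext t
        show (if h : a0 = a0 then GameTree.regretEst c p a (h ▸ t) / q a0 else 0) = _
        rw [dif_pos rfl]
        exact div_eq_inv_mul _ _
      rw [h1, GameTree.expT_smul, ih (hc a0) a]
      have hqa := (hq0 a0).ne'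
      show q a0 * ((q a0)⁻¹ * (c * (GameTree.euActAt p a - GameTree.euAt p)))
        = c * (GameTree.euActAt p a - GameTree.euAt p)
      field_simp
    · intro b' _ hb'
      have h0 : (fun t : GameTree.Traj (child b') =>
          GameTree.regretEst c (.step a0 p) a (.step b' t)) = fun _ => 0 :=
        funext fun t => dif_neg hb'
      rw [h0, GameTree.expT_zero, mul_zero]
    · simp


/-- For every game tree `T`, every internal node `h = p` of `T`, every
action `a ∈ A(h)`, and every real weight `c`, the baseline-corrected regret estimate is
unbiased:
`E_z[𝟙(z passes through h)·(c/π^q(h))·(v̂(S_h, a; z_h) − v̂(S_h; z_h))]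
  = c·(û((S_h)_a) − û(S_h))`. -/
theorem regretEst_unbiased (T : GameTree) (hV : T.Valid)
    (p : GameTree.INode T) (a : Fin (GameTree.numActs p + 1)) (c : ℝ) :
    GameTree.expT T (GameTree.regretEst c p a)
      = c * (GameTree.euActAt p a - GameTree.euAt p) := by
  exact regretEst_unbiased' T hV p a c
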